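/- arXiv:2301.02730 — 4 statements merged into one kernel-verified Lean document; each statement's English description precedes it below -/
import Mathlib

section
/- Let d be a natural number with 1 ≤ d ≤ 4, let A be a symmetric d×d real matrix, and let e ∈ ℝ^d be a unit vector. Then (tr A)·⟨Ae, e⟩ − ‖Ae‖² + ‖A‖_F² ≥ C_d·(tr A)², where C_d := min(1/5, 1 − 5(d−1)/16)/d > 0. -/
/-!
Let `P = 1 - e eᵀ` be the orthogonal projection onto `e⊥` and `M = P A P`, with `H = tr A`,
`a = ⟨Ae, e⟩`, `b = ‖Ae‖²`, `F = ‖A‖_F²`. Then `tr M = H - a` and `‖M‖_F² = F - 2b + a²`, and since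
`M = P M`, Cauchy–Schwarz for the Frobenius inner product against `P` (with `‖P‖_F² = tr P = d - 1`)
gives `(H - a)² ≤ (d - 1)(F - 2b + a²)`. Together with `a² ≤ b` this bounds the quadratic form
`H a - b + F` below by `(1 - (d - 1)/4) H²`, which dominates `C_d H²` as long as `d ≤ 4`.
-/

open Matrix

theorem one_sub_div_four_mul_sq_le_of_sq_sub_le {k H a b F : ℝ} (hk : 0 ≤ k) (hab : a ^ 2 ≤ b)
    (hG : 0 ≤ F - 2 * b + a ^ 2) (h : (H - a) ^ 2 ≤ k * (F - 2 * b + a ^ 2)) :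
    (1 - k / 4) * H ^ 2 ≤ H * a - b + F := by
  rcases hk.eq_or_lt with rfl | hk
  · obtain rfl : H = a := by nlinarith [sq_nonneg (H - a)]
    nlinarith
  · -- `k (H a - b + F - (1 - k/4) H²) = (H - a - k H / 2)² + k (b - a²) + (k G - (H - a)²)`
    -- with `G = F - 2 b + a²`
    have key : 0 ≤ k * (H * a - b + F - (1 - k / 4) * H ^ 2) := by
      nlinarith [sq_nonneg (H - a - k * H / 2), mul_nonneg hk.le (sub_nonneg.2 hab)]
    linarith [(mul_nonneg_iff_of_pos_left hk).1 key]

namespace Matrix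

variable {m n : Type*}

section Frobenius

variable [Fintype m] [Fintype n]

theorem trace_transpose_mul_eq_sum (X Y : Matrix m n ℝ) :
    trace (Xᵀ * Y) = ∑ i, ∑ j, X i j * Y i j := by
  simp only [trace, diag, mul_apply, transpose_apply]
  exact Finset.sum_comm

theorem trace_transpose_mul_self_nonneg (X : Matrix m n ℝ) : 0 ≤ trace (Xᵀ * X) := by
  rw [trace_transpose_mul_eq_sum]
  exact Finset.sum_nonneg fun i _ => Finset.sum_nonneg fun j _ => mul_self_nonneg _

theorem sq_trace_transpose_mul_le (X Y : Matrix m n ℝ) :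
    trace (Xᵀ * Y) ^ 2 ≤ trace (Xᵀ * X) * trace (Yᵀ * Y) := by
  simp only [trace_transpose_mul_eq_sum, ← Fintype.sum_prod_type']
  simpa only [sq] using Finset.sum_mul_sq_le_sq_mul_sq Finset.univ
    (fun p : m × n => X p.1 p.2) (fun p => Y p.1 p.2)

theorem sq_trace_le_trace_mul_trace_transpose_mul_self {P X : Matrix n n ℝ} (hPt : Pᵀ = P)
    (hPP : P * P = P) (hPX : P * X = X) : trace X ^ 2 ≤ trace P * trace (Xᵀ * X) := by
  have h := sq_trace_transpose_mul_le P X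
  rwa [hPt, hPX, hPP] at h

theorem sq_dotProduct_le (u v : n → ℝ) : (u ⬝ᵥ v) ^ 2 ≤ (u ⬝ᵥ u) * (v ⬝ᵥ v) := by
  simpa only [dotProduct, sq] using Finset.sum_mul_sq_le_sq_mul_sq Finset.univ u v

end Frobenius

section Projection

variable [DecidableEq n] {e : n → ℝ}

def projOrth (e : n → ℝ) : Matrix n n ℝ := 1 - vecMulVec e e

theorem transpose_projOrth (e : n → ℝ) : (projOrth e)ᵀ = projOrth e := by
  simp [projOrth, transpose_vecMulVec]

variable [Fintype n]

theorem projOrth_mul_self (he : e ⬝ᵥ e = 1) : projOrth e * projOrth e = projOrth e := by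
  simp only [projOrth, sub_mul, mul_sub, one_mul, mul_one, vecMulVec_mul_vecMulVec, he, one_smul]
  abel

theorem trace_projOrth (he : e ⬝ᵥ e = 1) : trace (projOrth e) = Fintype.card n - 1 := by
  simp [projOrth, he]

theorem mul_projOrth (A : Matrix n n ℝ) : A * projOrth e = A - vecMulVec (A *ᵥ e) e := by
  rw [projOrth, mul_sub, mul_one, mul_vecMulVec]

theorem trace_mul_projOrth (A : Matrix n n ℝ) :
    trace (A * projOrth e) = trace A - A *ᵥ e ⬝ᵥ e := by
  simp [mul_projOrth]

theorem IsSymm.trace_mul_projOrth_sq {A : Matrix n n ℝ} (hA : A.IsSymm) :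
    trace (A * projOrth e * (A * projOrth e)) =
      trace (A * A) - 2 * (A *ᵥ e ⬝ᵥ A *ᵥ e) + (A *ᵥ e ⬝ᵥ e) ^ 2 := by
  have hvec : e ᵥ* A = A *ᵥ e := by rw [← mulVec_transpose, hA.eq]
  have hAu : A *ᵥ (A *ᵥ e) ⬝ᵥ e = A *ᵥ e ⬝ᵥ A *ᵥ e := by
    rw [dotProduct_comm, dotProduct_mulVec, hvec]
  rw [mul_projOrth, sub_mul, mul_sub, mul_sub, vecMulVec_mul_vecMulVec, mul_vecMulVec,
    vecMulVec_mul]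
  simp only [trace_sub, trace_vecMulVec, hvec, hAu, dotProduct_smul, smul_eq_mul, dotProduct_comm e]
  ring

theorem projOrth_mul_self_mul (he : e ⬝ᵥ e = 1) (X : Matrix n n ℝ) :
    projOrth e * (projOrth e * X) = projOrth e * X := by
  rw [← Matrix.mul_assoc, projOrth_mul_self he]

theorem trace_projOrth_mul_mul_projOrth (he : e ⬝ᵥ e = 1) (A : Matrix n n ℝ) :
    trace (projOrth e * A * projOrth e) = trace A - A *ᵥ e ⬝ᵥ e := by
  rw [trace_mul_cycle, projOrth_mul_self he, trace_mul_comm, trace_mul_projOrth]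

theorem IsSymm.trace_transpose_mul_self_projOrth_mul_mul_projOrth {A : Matrix n n ℝ}
    (hA : A.IsSymm) (he : e ⬝ᵥ e = 1) :
    trace ((projOrth e * A * projOrth e)ᵀ * (projOrth e * A * projOrth e)) =
      trace (A * A) - 2 * (A *ᵥ e ⬝ᵥ A *ᵥ e) + (A *ᵥ e ⬝ᵥ e) ^ 2 := by
  set P := projOrth e
  rw [← hA.trace_mul_projOrth_sq, transpose_mul, transpose_mul, transpose_projOrth, hA.eq]
  calc trace (P * (A * P) * (P * A * P)) = trace (P * (A * P * (A * P))) := by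
        simp only [Matrix.mul_assoc, projOrth_mul_self_mul he, P]
    _ = trace (A * P * (A * P)) := by
        rw [trace_mul_comm, Matrix.mul_assoc (A * P), Matrix.mul_assoc A P P, projOrth_mul_self he]

theorem IsSymm.sq_trace_sub_le {A : Matrix n n ℝ} (hA : A.IsSymm) (he : e ⬝ᵥ e = 1) :
    (trace A - A *ᵥ e ⬝ᵥ e) ^ 2 ≤
      (Fintype.card n - 1) * (trace (A * A) - 2 * (A *ᵥ e ⬝ᵥ A *ᵥ e) + (A *ᵥ e ⬝ᵥ e) ^ 2) := by
  have h := sq_trace_le_trace_mul_trace_transpose_mul_self (X := projOrth e * A * projOrth e)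
    (transpose_projOrth e) (projOrth_mul_self he)
    (by rw [Matrix.mul_assoc _ A, projOrth_mul_self_mul he])
  rwa [trace_projOrth_mul_mul_projOrth he, hA.trace_transpose_mul_self_projOrth_mul_mul_projOrth he,
    trace_projOrth he] at h

theorem IsSymm.one_sub_div_four_mul_sq_trace_le {A : Matrix n n ℝ} (hA : A.IsSymm)
    (he : e ⬝ᵥ e = 1) :
    (1 - (Fintype.card n - 1) / 4) * trace A ^ 2 ≤
      trace A * (A *ᵥ e ⬝ᵥ e) - A *ᵥ e ⬝ᵥ A *ᵥ e + trace (Aᵀ * A) := by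
  have hk : 0 ≤ (Fintype.card n : ℝ) - 1 := by
    rw [← trace_projOrth he, ← projOrth_mul_self he]
    nth_rewrite 1 [← transpose_projOrth e]
    exact trace_transpose_mul_self_nonneg _
  have hG : 0 ≤ trace (A * A) - 2 * (A *ᵥ e ⬝ᵥ A *ᵥ e) + (A *ᵥ e ⬝ᵥ e) ^ 2 := by
    rw [← hA.trace_transpose_mul_self_projOrth_mul_mul_projOrth he]
    exact trace_transpose_mul_self_nonneg _
  have hab : (A *ᵥ e ⬝ᵥ e) ^ 2 ≤ A *ᵥ e ⬝ᵥ A *ᵥ e := by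
    simpa only [he, mul_one] using sq_dotProduct_le (A *ᵥ e) e
  rw [hA.eq]
  exact one_sub_div_four_mul_sq_le_of_sq_sub_le hk hab hG (hA.sq_trace_sub_le he)

end Projection

end Matrix

noncomputable def stableBubbleConstant (d : ℕ) : ℝ := min (1/5 : ℝ) (1 - 5 * ((d : ℝ) - 1) / 16) / d

theorem stableBubbleConstant_pos {d : ℕ} (hd1 : 1 ≤ d) (hd4 : d ≤ 4) :
    0 < stableBubbleConstant d := by
  have : (d : ℝ) ≤ 4 := by exact_mod_cast hd4
  exact div_pos (lt_min (by norm_num) (by linarith)) (by positivity)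

theorem stableBubbleConstant_le {d : ℕ} (hd1 : 1 ≤ d) (hd4 : d ≤ 4) :
    stableBubbleConstant d ≤ 1 - ((d : ℝ) - 1) / 4 := by
  have h1 : (1 : ℝ) ≤ d := by exact_mod_cast hd1
  have h4 : (d : ℝ) ≤ 4 := by exact_mod_cast hd4
  calc stableBubbleConstant d ≤ (1/5 : ℝ) / d :=
        div_le_div_of_nonneg_right (min_le_left _ _) (by positivity)
    _ ≤ 1/5 := div_le_self (by norm_num) h1
    _ ≤ 1 - ((d : ℝ) - 1) / 4 := by linarith

/-- For `1 ≤ d ≤ 4`, a symmetric `d × d` real matrix `A`, and a unit vector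
`e ∈ ℝ^d`, one has `(tr A)⟨Ae, e⟩ − ‖Ae‖² + ‖A‖_F² ≥ C_d (tr A)²` where
`C_d = min(1/5, 1 − 5(d−1)/16)/d > 0`. -/
theorem stmt_0 (d : ℕ) (hd1 : 1 ≤ d) (hd4 : d ≤ 4)
    (A : Matrix (Fin d) (Fin d) ℝ) (hA : A.IsSymm)
    (e : Fin d → ℝ) (he : ∑ i, e i ^ 2 = 1) :
    0 < min (1/5 : ℝ) (1 - 5 * ((d : ℝ) - 1) / 16) / d ∧
    A.trace * (∑ i, A.mulVec e i * e i) - (∑ i, (A.mulVec e i) ^ 2)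
        + (∑ i, ∑ j, (A i j) ^ 2)
      ≥ (min (1/5 : ℝ) (1 - 5 * ((d : ℝ) - 1) / 16) / d) * A.trace ^ 2 := by
  have he' : e ⬝ᵥ e = 1 := by simpa only [dotProduct, sq] using he
  have key := hA.one_sub_div_four_mul_sq_trace_le he'
  rw [Fintype.card_fin, trace_transpose_mul_eq_sum] at key
  refine ⟨stableBubbleConstant_pos hd1 hd4, ?_⟩
  calc stableBubbleConstant d * A.trace ^ 2 ≤ (1 - ((d : ℝ) - 1) / 4) * A.trace ^ 2 :=
        mul_le_mul_of_nonneg_right (stableBubbleConstant_le hd1 hd4) (sq_nonneg _)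
    _ ≤ _ := by simpa only [dotProduct, sq] using key
end

section
/- Let n ≥ 2 be a natural number, let β be a real number with β > 1 − 1/(n−1), and let λ > 0. Set D := 1/(n−1) + β − 1, C₂ := 1/(n−1) − ((n−3)/(n−1))²/(4D), and C₃ := ((n−3)/(n−1))/(2D). Let I ⊆ ℝ be an open interval and let h, v, f : I → ℝ be differentiable with v and f twice differentiable and v > 0, f > 0 on I. Suppose that for all r ∈ I: h'(r) = −C₂h(r)² − λ/β, v'(r) = −C₃h(r)v(r), and (n−1)f'(r)/f(r) = h(r) − v'(r)/v(r). Then for all r ∈ I: v''(r) + (n−1)(f'(r)/f(r))v'(r) + (n−1)(f''(r)/f(r))v(r) + (λ/β)v(r) − (1−β)v(r)⁻¹v'(r)² = 0. -/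
/-!
Both `v` and `f` solve linear equations `y' = c h y`, with `c = -C₃` for `v` and
`c = (1 + C₃)/(n - 1)` for `f` by the third equation. Hence `y''/y = c (h' + c h²)`, and after
substituting `h' = -C₂ h² - λ/β` the constant terms `± λ/β` cancel, so the left-hand side is
`v h²` times a constant depending only on `n`, `β`. That constant vanishes for the given `C₂`, `C₃`.
-/

open Filter Topology

theorem deriv_deriv_of_deriv_eq_mul {h y : ℝ → ℝ} {c r : ℝ}
    (hy : deriv y =ᶠ[𝓝 r] fun x => c * h x * y x)
    (hh : DifferentiableAt ℝ h r) (hyd : DifferentiableAt ℝ y r) :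
    deriv (deriv y) r = c * (deriv h r + c * h r ^ 2) * y r := by
  have hy_r : deriv y r = c * h r * y r := hy.eq_of_nhds
  have hprod : HasDerivAt (fun x => c * h x * y x)
      (c * deriv h r * y r + c * h r * deriv y r) r :=
    (hh.hasDerivAt.const_mul c).mul hyd.hasDerivAt
  rw [hy.deriv_eq, hprod.deriv, hy_r]
  ring

/-- The expression equals `D C₃² - ((N-3)/(N-1)) C₃ + 1/(N-1) - C₂`; `C₃` is the vertex of this
quadratic and `C₂` is chosen so that its minimum is `0`. -/
theorem hSq_coeff_eq_zero {N β D C₂ C₃ : ℝ} (hN : N - 1 ≠ 0) (hD0 : D ≠ 0)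
    (hD : D = 1 / (N - 1) + β - 1)
    (hC₂ : C₂ = 1 / (N - 1) - ((N - 3) / (N - 1)) ^ 2 / (4 * D))
    (hC₃ : C₃ = ((N - 3) / (N - 1)) / (2 * D)) :
    -C₂ - C₃ * (1 + C₃) + β * C₃ ^ 2 + (1 + C₃) ^ 2 / (N - 1) = 0 := by
  have hβ : β = D + 1 - 1 / (N - 1) := by rw [hD]; ring
  subst hβ hC₂ hC₃
  field_simp
  ring

theorem stmt_9_general (n : ℕ) (hn : 2 ≤ n) (β lam : ℝ)
    (hβ : β > 1 - 1 / ((n : ℝ) - 1))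
    (D C₂ C₃ : ℝ)
    (hD : D = 1 / ((n : ℝ) - 1) + β - 1)
    (hC₂ : C₂ = 1 / ((n : ℝ) - 1) - (((n : ℝ) - 3) / ((n : ℝ) - 1)) ^ 2 / (4 * D))
    (hC₃ : C₃ = (((n : ℝ) - 3) / ((n : ℝ) - 1)) / (2 * D))
    (I : Set ℝ) (hIopen : IsOpen I)
    (h v f : ℝ → ℝ)
    (hdh : ∀ r ∈ I, DifferentiableAt ℝ h r)
    (hdv : ∀ r ∈ I, DifferentiableAt ℝ v r)
    (hdf : ∀ r ∈ I, DifferentiableAt ℝ f r)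
    (hvpos : ∀ r ∈ I, 0 < v r) (hfpos : ∀ r ∈ I, 0 < f r)
    (ode1 : ∀ r ∈ I, deriv h r = -C₂ * h r ^ 2 - lam / β)
    (ode2 : ∀ r ∈ I, deriv v r = -C₃ * h r * v r)
    (ode3 : ∀ r ∈ I, ((n : ℝ) - 1) * deriv f r / f r = h r - deriv v r / v r) :
    ∀ r ∈ I,
      deriv (deriv v) r + ((n : ℝ) - 1) * (deriv f r / f r) * deriv v r
        + ((n : ℝ) - 1) * (deriv (deriv f) r / f r) * v r
        + (lam / β) * v r - (1 - β) * (v r)⁻¹ * (deriv v r) ^ 2 = 0 := by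
  intro r hr
  have hN : (n : ℝ) - 1 ≠ 0 := by
    have : (2 : ℝ) ≤ n := by exact_mod_cast hn
    linarith
  have hD0 : D ≠ 0 := by linarith
  have hI : I ∈ 𝓝 r := hIopen.mem_nhds hr
  have hv' : deriv v =ᶠ[𝓝 r] fun x => -C₃ * h x * v x := by
    filter_upwards [hI] with x hx using ode2 x hx
  have hf' : deriv f =ᶠ[𝓝 r] fun x => (1 + C₃) / ((n : ℝ) - 1) * h x * f x := by
    filter_upwards [hI] with x hx
    have hx3 := ode3 x hx
    rw [ode2 x hx] at hx3
    field_simp [(hvpos x hx).ne', (hfpos x hx).ne'] at hx3 ⊢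
    linarith
  rw [deriv_deriv_of_deriv_eq_mul hv' (hdh r hr) (hdv r hr),
    deriv_deriv_of_deriv_eq_mul hf' (hdh r hr) (hdf r hr), hv'.eq_of_nhds, hf'.eq_of_nhds,
    ode1 r hr]
  have hv0 := (hvpos r hr).ne'
  have hf0 := (hfpos r hr).ne'
  have hcoeff := hSq_coeff_eq_zero hN hD0 hD hC₂ hC₃
  field_simp at hcoeff ⊢
  linear_combination v r * h r ^ 2 * hcoeff

/-- solutions of the ODE system for `(h, v, f)` satisfy the second-order
equation for `v`. -/
theorem stmt_9 (n : ℕ) (hn : 2 ≤ n) (β lam : ℝ)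
    (hβ : β > 1 - 1 / ((n : ℝ) - 1)) (hlam : 0 < lam)
    (D C₂ C₃ : ℝ)
    (hD : D = 1 / ((n : ℝ) - 1) + β - 1)
    (hC₂ : C₂ = 1 / ((n : ℝ) - 1) - (((n : ℝ) - 3) / ((n : ℝ) - 1)) ^ 2 / (4 * D))
    (hC₃ : C₃ = (((n : ℝ) - 3) / ((n : ℝ) - 1)) / (2 * D))
    (I : Set ℝ) (hIopen : IsOpen I) (hIint : I.OrdConnected)
    (h v f : ℝ → ℝ)
    (hdh : ∀ r ∈ I, DifferentiableAt ℝ h r)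
    (hdv : ∀ r ∈ I, DifferentiableAt ℝ v r)
    (hdv2 : ∀ r ∈ I, DifferentiableAt ℝ (deriv v) r)
    (hdf : ∀ r ∈ I, DifferentiableAt ℝ f r)
    (hdf2 : ∀ r ∈ I, DifferentiableAt ℝ (deriv f) r)
    (hvpos : ∀ r ∈ I, 0 < v r) (hfpos : ∀ r ∈ I, 0 < f r)
    (ode1 : ∀ r ∈ I, deriv h r = -C₂ * h r ^ 2 - lam / β)
    (ode2 : ∀ r ∈ I, deriv v r = -C₃ * h r * v r)
    (ode3 : ∀ r ∈ I, ((n : ℝ) - 1) * deriv f r / f r = h r - deriv v r / v r) :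
    ∀ r ∈ I,
      deriv (deriv v) r + ((n : ℝ) - 1) * (deriv f r / f r) * deriv v r
        + ((n : ℝ) - 1) * (deriv (deriv f) r / f r) * v r
        + (lam / β) * v r - (1 - β) * (v r)⁻¹ * (deriv v r) ^ 2 = 0 :=
  stmt_9_general n hn β lam hβ D C₂ C₃ hD hC₂ hC₃ I hIopen h v f hdh hdv hdf hvpos hfpos ode1 ode2
    ode3
end

section
/- Let n ≥ 2 be a natural number, let β ≠ 0 and λ be real numbers, let I ⊆ ℝ be an open interval, and let v, f : I → ℝ be twice differentiable with v > 0 and f > 0 on I. Suppose that for all r ∈ I: v''(r) + (n−1)(f'(r)/f(r))v'(r) + (n−1)(f''(r)/f(r))v(r) + (λ/β)v(r) − (1−β)v(r)⁻¹v'(r)² = 0. Then u := v^β satisfies, for all r ∈ I: u''(r) + (n−1)(f'(r)/f(r))u'(r) + β(n−1)(f''(r)/f(r))u(r) + λu(r) = 0. -/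
/-- if `v` solves the quasilinear equation, then `u = v^β` solves the
linear equation `u'' + (n−1)(f'/f)u' + β(n−1)(f''/f)u + λu = 0`. -/
theorem stmt_10 (n : ℕ) (hn : 2 ≤ n) (β lam : ℝ) (hβ : β ≠ 0)
    (I : Set ℝ) (hIopen : IsOpen I) (hIint : I.OrdConnected)
    (v f : ℝ → ℝ)
    (hdv : ∀ r ∈ I, DifferentiableAt ℝ v r)
    (hdv2 : ∀ r ∈ I, DifferentiableAt ℝ (deriv v) r)
    (hdf : ∀ r ∈ I, DifferentiableAt ℝ f r)
    (hdf2 : ∀ r ∈ I, DifferentiableAt ℝ (deriv f) r)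
    (hvpos : ∀ r ∈ I, 0 < v r) (hfpos : ∀ r ∈ I, 0 < f r)
    (hode : ∀ r ∈ I,
      deriv (deriv v) r + ((n : ℝ) - 1) * (deriv f r / f r) * deriv v r
        + ((n : ℝ) - 1) * (deriv (deriv f) r / f r) * v r
        + (lam / β) * v r - (1 - β) * (v r)⁻¹ * (deriv v r) ^ 2 = 0)
    (u : ℝ → ℝ) (hu : u = fun r => v r ^ β) :
    ∀ r ∈ I,
      deriv (deriv u) r + ((n : ℝ) - 1) * (deriv f r / f r) * deriv u r
        + β * ((n : ℝ) - 1) * (deriv (deriv f) r / f r) * u r + lam * u r = 0 := by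
  -- first derivative of u on I
  have hu' : ∀ x ∈ I, HasDerivAt u (deriv v x * β * v x ^ (β - 1)) x := by
    intro x hx
    rw [hu]
    exact ((hdv x hx).hasDerivAt).rpow_const (Or.inl (hvpos x hx).ne')
  have hderivu : ∀ x ∈ I, deriv u x = deriv v x * β * v x ^ (β - 1) := fun x hx =>
    (hu' x hx).deriv
  intro r hr
  have hvne : v r ≠ 0 := (hvpos r hr).ne'
  have hfne : f r ≠ 0 := (hfpos r hr).ne'
  -- second derivative
  have hg : HasDerivAt (fun x => deriv v x * β * v x ^ (β - 1))
      (deriv (deriv v) r * β * v r ^ (β - 1)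
        + deriv v r * β * (deriv v r * (β - 1) * v r ^ (β - 1 - 1))) r := by
    have h1 : HasDerivAt (fun x => deriv v x * β) (deriv (deriv v) r * β) r :=
      ((hdv2 r hr).hasDerivAt).mul_const β
    have h2 : HasDerivAt (fun x => v x ^ (β - 1))
        (deriv v r * (β - 1) * v r ^ (β - 1 - 1)) r :=
      ((hdv r hr).hasDerivAt).rpow_const (Or.inl hvne)
    exact h1.mul h2
  have hEq : deriv u =ᶠ[nhds r] fun x => deriv v x * β * v x ^ (β - 1) := by
    filter_upwards [hIopen.mem_nhds hr] with x hx using hderivu x hx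
  have hu'' : deriv (deriv u) r
      = deriv (deriv v) r * β * v r ^ (β - 1)
        + deriv v r * β * (deriv v r * (β - 1) * v r ^ (β - 1 - 1)) := by
    rw [hEq.deriv_eq]; exact hg.deriv
  have hp1 : v r ^ (β - 1 - 1) = v r ^ (β - 1) / v r := Real.rpow_sub_one hvne _
  have hp2 : v r ^ β = v r ^ (β - 1) * v r := by
    rw [Real.rpow_sub_one hvne]
    field_simp
  have key := hode r hr
  rw [hu'', hderivu r hr, hu]
  simp only [hp1, hp2]
  field_simp at key ⊢
  linear_combination v r ^ (β - 1) * key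
end

section
/- Let n ≥ 4 be a natural number and λ > 0 a real number. Set β := (n−1)/4 and C₃ := 2/(n−3). Define h, v, f : ℝ → ℝ by h(r) := −(λ/β)r, v(r) := exp(C₃λr²/(2β)), and f(r) := exp(−(1+C₃)λr²/(2(n−1)β)). Then for all r ∈ ℝ: (i) h'(r) = −λ/β; (ii) v'(r) = −C₃h(r)v(r); (iii) (n−1)f'(r)/f(r) = h(r) − v'(r)/v(r); and consequently (iv) u(r) := v(r)^β = exp(C₃λr²/2) satisfies u''(r) + (n−1)(f'(r)/f(r))u'(r) + β(n−1)(f''(r)/f(r))u(r) + λu(r) = 0. -/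
lemma expsq_hasDerivAt (a b r : ℝ) :
    HasDerivAt (fun r : ℝ => Real.exp (a * r ^ 2 / b))
      ((2 * a * r / b) * Real.exp (a * r ^ 2 / b)) r := by
  have h1 : HasDerivAt (fun r : ℝ => a * r ^ 2 / b) (a * (2 * r ^ 1) / b) r := by
    exact_mod_cast ((hasDerivAt_pow 2 r).const_mul a).div_const b
  have h2 := h1.exp
  convert h2 using 1
  ring

lemma expsq_deriv2 (a b r : ℝ) :
    deriv (deriv (fun r : ℝ => Real.exp (a * r ^ 2 / b))) r =
      (2 * a / b) * Real.exp (a * r ^ 2 / b)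
        + (2 * a * r / b) * ((2 * a * r / b) * Real.exp (a * r ^ 2 / b)) := by
  have h1 : deriv (fun r : ℝ => Real.exp (a * r ^ 2 / b))
      = fun r => (2 * a * r / b) * Real.exp (a * r ^ 2 / b) :=
    funext fun r => (expsq_hasDerivAt a b r).deriv
  rw [h1]
  have hlin : HasDerivAt (fun r : ℝ => 2 * a * r / b) (2 * a / b) r := by
    have := ((hasDerivAt_id r).const_mul (2 * a)).div_const b
    simpa using this
  exact (hlin.mul (expsq_hasDerivAt a b r)).deriv

/-- the explicit Gaussian-profile solutions for `β = (n−1)/4`,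
`C₃ = 2/(n−3)`: `h(r) = −(λ/β)r`, `v(r) = exp(C₃λr²/(2β))`,
`f(r) = exp(−(1+C₃)λr²/(2(n−1)β))` solve the ODE system, and `u = v^β = exp(C₃λr²/2)`
solves `u'' + (n−1)(f'/f)u' + β(n−1)(f''/f)u + λu = 0`. -/
theorem stmt_11 (n : ℕ) (hn : 4 ≤ n) (lam : ℝ) (hlam : 0 < lam)
    (β C₃ : ℝ) (hβ : β = ((n : ℝ) - 1) / 4) (hC₃ : C₃ = 2 / ((n : ℝ) - 3))
    (h v f u : ℝ → ℝ)
    (hh : h = fun r => -(lam / β) * r)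
    (hv : v = fun r => Real.exp (C₃ * lam * r ^ 2 / (2 * β)))
    (hf : f = fun r => Real.exp (-(1 + C₃) * lam * r ^ 2 / (2 * ((n : ℝ) - 1) * β)))
    (hu : u = fun r => v r ^ β) :
    ∀ r : ℝ,
      deriv h r = -(lam / β) ∧
      deriv v r = -C₃ * h r * v r ∧
      ((n : ℝ) - 1) * deriv f r / f r = h r - deriv v r / v r ∧
      (u r = Real.exp (C₃ * lam * r ^ 2 / 2) ∧
        deriv (deriv u) r + ((n : ℝ) - 1) * (deriv f r / f r) * deriv u r
          + β * ((n : ℝ) - 1) * (deriv (deriv f) r / f r) * u r + lam * u r = 0) := by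
  have hn4 : (4 : ℝ) ≤ (n : ℝ) := by exact_mod_cast hn
  have hn3 : (n : ℝ) - 3 ≠ 0 := by linarith
  have hn1 : (n : ℝ) - 1 ≠ 0 := by linarith
  have hβ0 : β ≠ 0 := by rw [hβ]; intro hcon; apply hn1; linarith [div_eq_zero_iff.mp hcon]
  -- rewrite u as an explicit exponential
  have hu' : u = fun r => Real.exp (C₃ * lam * r ^ 2 / 2) := by
    funext r
    rw [hu, hv]
    show Real.exp (C₃ * lam * r ^ 2 / (2 * β)) ^ β = _
    rw [Real.rpow_def_of_pos (Real.exp_pos _), Real.log_exp]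
    congr 1
    field_simp
  intro r
  have hdv : deriv v r = (2 * (C₃ * lam) * r / (2 * β)) * v r := by
    rw [hv]; exact (expsq_hasDerivAt (C₃ * lam) (2 * β) r).deriv
  have hdf : deriv f r = (2 * (-(1 + C₃) * lam) * r / (2 * ((n : ℝ) - 1) * β)) * f r := by
    rw [hf]; exact (expsq_hasDerivAt (-(1 + C₃) * lam) (2 * ((n : ℝ) - 1) * β) r).deriv
  have hdu : deriv u r = (2 * (C₃ * lam) * r / 2) * u r := by
    rw [hu']; exact (expsq_hasDerivAt (C₃ * lam) 2 r).deriv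
  have hddf : deriv (deriv f) r =
      (2 * (-(1 + C₃) * lam) / (2 * ((n : ℝ) - 1) * β)) * f r
        + (2 * (-(1 + C₃) * lam) * r / (2 * ((n : ℝ) - 1) * β))
          * ((2 * (-(1 + C₃) * lam) * r / (2 * ((n : ℝ) - 1) * β)) * f r) := by
    rw [hf]; exact expsq_deriv2 (-(1 + C₃) * lam) (2 * ((n : ℝ) - 1) * β) r
  have hddu : deriv (deriv u) r =
      (2 * (C₃ * lam) / 2) * u r
        + (2 * (C₃ * lam) * r / 2) * ((2 * (C₃ * lam) * r / 2) * u r) := by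
    rw [hu']; exact expsq_deriv2 (C₃ * lam) 2 r
  have hfpos : 0 < f r := by rw [hf]; exact Real.exp_pos _
  have hvpos : 0 < v r := by rw [hv]; exact Real.exp_pos _
  refine ⟨?_, ?_, ?_, ?_, ?_⟩
  · rw [hh]
    simpa using ((hasDerivAt_id r).const_mul (-(lam / β))).deriv
  · rw [hdv, hh]
    field_simp
  · rw [hdv, hdf, hh]
    field_simp
    ring
  · rw [hu']
  · rw [hddu, hddf, hdu, hdf]
    subst hβ hC₃
    field_simp
    ring
end
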